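/- Let G = (V,E) be a finite simple graph with edge weights K : E → ℂ and let x_1, …, x_{2n} ∈ V be distinct vertices (n ≥ 2) satisfying the cyclic-order hypothesis. Then Σ_{k=2}^{2n} (−1)^k Σ_{l,m ∈ {2,…,2n}, with k, l, m pairwise distinct} Z^{(2)}_{G,K}({x_1, x_k}, {x_2, …, x_{2n}} ∖ {x_k}; x_1 ↔ x_m and x_k ↔ x_l) = 0. -/
import Mathlib


open scoped Classical symmDiff
open Finset

/-- `ω` is a dimer cover (perfect matching) of the graph `G` depleted by the
monomer set `M`. -/
def IsDimerCover {V : Type*} (G : SimpleGraph V) (M : Finset V)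
    (ω : Finset (Sym2 V)) : Prop :=
  (∀ e ∈ ω, e ∈ G.edgeSet) ∧
  (∀ v ∈ M, ∀ e ∈ ω, v ∉ e) ∧
  (∀ v : V, v ∉ M → ∃! e, e ∈ ω ∧ v ∈ e)

/-- The monomer-depleted weighted dimer partition function `Z_{G,K}(M)`. -/
noncomputable def Zdimer {V : Type*} [Fintype V] [DecidableEq V]
    (G : SimpleGraph V) (K : Sym2 V → ℂ) (M : Finset V) : ℂ :=
  ∑ ω ∈ Finset.univ.filter (IsDimerCover G M), ∏ b ∈ ω, K b

/-- The spanning subgraph of the overlay `ω₁ Δ ω₂`. -/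
def symmGraph {V : Type*} [DecidableEq V] (ω₁ ω₂ : Finset (Sym2 V)) : SimpleGraph V :=
  SimpleGraph.fromEdgeSet (↑(ω₁ ∆ ω₂) : Set (Sym2 V))

/-- The double dimer partition function `Z²_{G,K}(M₁, M₂; C)` restricted by the
connection conditions `C`: a list of pairs `(u, v)` each required to lie in the
same connected component of the overlay `ω₁ Δ ω₂`. -/
noncomputable def Zdouble {V : Type*} [Fintype V] [DecidableEq V]
    (G : SimpleGraph V) (K : Sym2 V → ℂ) (M₁ M₂ : Finset V) (C : List (V × V)) : ℂ :=
  ∑ p ∈ Finset.univ.filter (fun p : Finset (Sym2 V) × Finset (Sym2 V) =>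
      IsDimerCover G M₁ p.1 ∧ IsDimerCover G M₂ p.2 ∧
      ∀ c ∈ C, (symmGraph p.1 p.2).Reachable c.1 c.2),
    (∏ b ∈ p.1, K b) * ∏ b ∈ p.2, K b

set_option linter.unusedSectionVars false

section Helpers
variable {V : Type*} [DecidableEq V]

/-- The set of overlay edges lying in the connected component of `w`. -/
noncomputable def swapSet (w : V) (ω₁ ω₂ : Finset (Sym2 V)) : Finset (Sym2 V) :=
  (ω₁ ∆ ω₂).filter (fun e => ∃ v ∈ e, (symmGraph ω₁ ω₂).Reachable w v)

lemma swapSet_subset (w : V) (ω₁ ω₂ : Finset (Sym2 V)) :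
    swapSet w ω₁ ω₂ ⊆ ω₁ ∆ ω₂ := Finset.filter_subset _ _

lemma symmGraph_adj {ω₁ ω₂ : Finset (Sym2 V)} {a b : V} :
    (symmGraph ω₁ ω₂).Adj a b ↔ s(a,b) ∈ ω₁ ∆ ω₂ ∧ a ≠ b := by
  rw [symmGraph, SimpleGraph.fromEdgeSet_adj, Finset.mem_coe]

lemma symmGraph_comm (ω₁ ω₂ : Finset (Sym2 V)) : symmGraph ω₂ ω₁ = symmGraph ω₁ ω₂ := by
  rw [symmGraph, symmGraph, symmDiff_comm]

lemma swapSet_comm (w : V) (ω₁ ω₂ : Finset (Sym2 V)) :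
    swapSet w ω₂ ω₁ = swapSet w ω₁ ω₂ := by
  rw [swapSet, swapSet, symmDiff_comm ω₂ ω₁, symmGraph_comm]

lemma symmDiff_symmDiff_overlay (ω₁ ω₂ C : Finset (Sym2 V)) :
    (ω₁ ∆ C) ∆ (ω₂ ∆ C) = ω₁ ∆ ω₂ := by
  rw [symmDiff_symmDiff_symmDiff_comm, symmDiff_self, symmDiff_bot]

lemma symmGraph_swap (ω₁ ω₂ C : Finset (Sym2 V)) :
    symmGraph (ω₁ ∆ C) (ω₂ ∆ C) = symmGraph ω₁ ω₂ := by
  rw [symmGraph, symmGraph, symmDiff_symmDiff_overlay]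

lemma overlay_not_isDiag {G : SimpleGraph V} {ω₁ ω₂ : Finset (Sym2 V)}
    (h₁ : ∀ e ∈ ω₁, e ∈ G.edgeSet) (h₂ : ∀ e ∈ ω₂, e ∈ G.edgeSet)
    {e : Sym2 V} (he : e ∈ ω₁ ∆ ω₂) : ¬ e.IsDiag := by
  rcases Finset.mem_symmDiff.1 he with ⟨h, _⟩ | ⟨h, _⟩
  · exact G.not_isDiag_of_mem_edgeSet (h₁ _ h)
  · exact G.not_isDiag_of_mem_edgeSet (h₂ _ h)

lemma reach_of_mem_edge {ω₁ ω₂ : Finset (Sym2 V)}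
    (hd : ∀ e ∈ ω₁ ∆ ω₂, ¬ e.IsDiag) {w u v : V} {e : Sym2 V}
    (he : e ∈ ω₁ ∆ ω₂) (hu : u ∈ e) (hv : v ∈ e)
    (hr : (symmGraph ω₁ ω₂).Reachable w u) : (symmGraph ω₁ ω₂).Reachable w v := by
  induction e using Sym2.ind with
  | _ a b =>
    have hab : a ≠ b := by
      intro h; exact hd _ he (by simp [Sym2.mk_isDiag_iff, h])
    rcases Sym2.mem_iff.1 hu with rfl | rfl <;> rcases Sym2.mem_iff.1 hv with rfl | rfl
    · exact hr
    · exact hr.trans (SimpleGraph.Adj.reachable (symmGraph_adj.2 ⟨he, hab⟩))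
    · exact hr.trans (SimpleGraph.Adj.reachable (symmGraph_adj.2 ⟨by rwa [Sym2.eq_swap], hab.symm⟩))
    · exact hr

lemma mem_symmDiff_swapSet {ω₁ ω₂ : Finset (Sym2 V)}
    (hd : ∀ e ∈ ω₁ ∆ ω₂, ¬ e.IsDiag) (w : V) {v : V} {e : Sym2 V} (hv : v ∈ e) :
    ((symmGraph ω₁ ω₂).Reachable w v →
      ((e ∈ ω₁ ∆ swapSet w ω₁ ω₂ ↔ e ∈ ω₂) ∧ (e ∈ ω₂ ∆ swapSet w ω₁ ω₂ ↔ e ∈ ω₁))) ∧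
    (¬(symmGraph ω₁ ω₂).Reachable w v →
      ((e ∈ ω₁ ∆ swapSet w ω₁ ω₂ ↔ e ∈ ω₁) ∧ (e ∈ ω₂ ∆ swapSet w ω₁ ω₂ ↔ e ∈ ω₂))) := by
  constructor
  · intro hr
    have hC : e ∈ swapSet w ω₁ ω₂ ↔ e ∈ ω₁ ∆ ω₂ :=
      ⟨fun h => (Finset.mem_filter.1 h).1, fun h => Finset.mem_filter.2 ⟨h, v, hv, hr⟩⟩
    constructor
    · rw [Finset.mem_symmDiff, hC, Finset.mem_symmDiff]; tauto
    · rw [Finset.mem_symmDiff, hC, Finset.mem_symmDiff]; tauto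
  · intro hr
    have hC : e ∉ swapSet w ω₁ ω₂ := by
      intro h
      obtain ⟨heΔ, u, hu, hru⟩ := Finset.mem_filter.1 h
      exact hr (reach_of_mem_edge hd heΔ hu hv hru)
    constructor <;> · rw [Finset.mem_symmDiff]; tauto

lemma isDimerCover_swap {G : SimpleGraph V} {ω₁ ω₂ : Finset (Sym2 V)} {M₁ M₂ M₁' : Finset V}
    (h₁ : IsDimerCover G M₁ ω₁) (h₂ : IsDimerCover G M₂ ω₂) (w : V)
    (hM : ∀ v : V, ((symmGraph ω₁ ω₂).Reachable w v → (v ∈ M₁' ↔ v ∈ M₂)) ∧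
      (¬(symmGraph ω₁ ω₂).Reachable w v → (v ∈ M₁' ↔ v ∈ M₁))) :
    IsDimerCover G M₁' (ω₁ ∆ swapSet w ω₁ ω₂) := by
  have hd : ∀ e ∈ ω₁ ∆ ω₂, ¬ e.IsDiag := fun e he => overlay_not_isDiag h₁.1 h₂.1 he
  refine ⟨?_, ?_, ?_⟩
  · intro e he
    rcases Finset.mem_symmDiff.1 he with ⟨h, _⟩ | ⟨h, _⟩
    · exact h₁.1 _ h
    · rcases Finset.mem_symmDiff.1 ((Finset.filter_subset _ _) h) with ⟨h', _⟩ | ⟨h', _⟩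
      · exact h₁.1 _ h'
      · exact h₂.1 _ h'
  · intro v hv e he hve
    by_cases hr : (symmGraph ω₁ ω₂).Reachable w v
    · exact h₂.2.1 v (((hM v).1 hr).1 hv) e (((mem_symmDiff_swapSet hd w hve).1 hr).1.mp he) hve
    · exact h₁.2.1 v (((hM v).2 hr).1 hv) e (((mem_symmDiff_swapSet hd w hve).2 hr).1.mp he) hve
  · intro v hv
    by_cases hr : (symmGraph ω₁ ω₂).Reachable w v
    · have hv2 : v ∉ M₂ := fun h => hv (((hM v).1 hr).2 h)
      obtain ⟨e, ⟨he, hve⟩, hu⟩ := h₂.2.2 v hv2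
      refine ⟨e, ⟨((mem_symmDiff_swapSet hd w hve).1 hr).1.mpr he, hve⟩, ?_⟩
      rintro e' ⟨he', hve'⟩
      exact hu e' ⟨((mem_symmDiff_swapSet hd w hve').1 hr).1.mp he', hve'⟩
    · have hv1 : v ∉ M₁ := fun h => hv (((hM v).2 hr).2 h)
      obtain ⟨e, ⟨he, hve⟩, hu⟩ := h₁.2.2 v hv1
      refine ⟨e, ⟨((mem_symmDiff_swapSet hd w hve).2 hr).1.mpr he, hve⟩, ?_⟩
      rintro e' ⟨he', hve'⟩
      exact hu e' ⟨((mem_symmDiff_swapSet hd w hve').2 hr).1.mp he', hve'⟩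

lemma swap_swapSet {ω₁ ω₂ : Finset (Sym2 V)} {w w' : V}
    (hr : (symmGraph ω₁ ω₂).Reachable w w') :
    swapSet w' (ω₁ ∆ swapSet w ω₁ ω₂) (ω₂ ∆ swapSet w ω₁ ω₂) = swapSet w ω₁ ω₂ := by
  rw [swapSet, symmDiff_symmDiff_overlay, symmGraph_swap, swapSet]
  refine Finset.filter_congr fun e he => ?_
  constructor
  · rintro ⟨v, hv, hrv⟩; exact ⟨v, hv, hr.trans hrv⟩
  · rintro ⟨v, hv, hrv⟩; exact ⟨v, hv, hr.symm.trans hrv⟩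

lemma prod_symmDiff_mul {C ω₁ ω₂ : Finset (Sym2 V)} (hC : C ⊆ ω₁ ∆ ω₂) (K : Sym2 V → ℂ) :
    (∏ b ∈ ω₁ ∆ C, K b) * ∏ b ∈ ω₂ ∆ C, K b = (∏ b ∈ ω₁, K b) * ∏ b ∈ ω₂, K b := by
  have hu : (ω₁ ∆ C) ∪ (ω₂ ∆ C) = ω₁ ∪ ω₂ := by
    ext e
    have h := @hC e
    simp only [Finset.mem_union, Finset.mem_symmDiff] at *
    tauto
  have hi : (ω₁ ∆ C) ∩ (ω₂ ∆ C) = ω₁ ∩ ω₂ := by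
    ext e
    have h := @hC e
    simp only [Finset.mem_inter, Finset.mem_symmDiff] at *
    tauto
  rw [← Finset.prod_union_inter, hu, hi, Finset.prod_union_inter]

end Helpers

section Ctx
variable {V : Type*} [Fintype V] [DecidableEq V] {G : SimpleGraph V} {n : ℕ} {x : ℕ → V}

lemma reach_odd (hn : 2 ≤ n)
    (hcyc : ∀ M₁ M₂ : Finset V, Disjoint M₁ M₂ →
      M₁ ∪ M₂ = (Finset.Icc 1 (2 * n)).image x →
      ∀ ω₁ ω₂ : Finset (Sym2 V), IsDimerCover G M₁ ω₁ → IsDimerCover G M₂ ω₂ →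
      ∀ i ∈ Finset.Icc 1 (2 * n), ∀ j ∈ Finset.Icc 1 (2 * n), i < j →
        (symmGraph ω₁ ω₂).Reachable (x i) (x j) → Odd (j - i))
    {k : ℕ} (hk : k ∈ Finset.Icc 2 (2*n)) {ω₁ ω₂ : Finset (Sym2 V)}
    (h₁ : IsDimerCover G {x 1, x k} ω₁)
    (h₂ : IsDimerCover G ((Finset.Icc 1 (2*n)).image x \ {x 1, x k}) ω₂) :
    ∀ i ∈ Finset.Icc 1 (2*n), ∀ j ∈ Finset.Icc 1 (2*n), i ≠ j →
      (symmGraph ω₁ ω₂).Reachable (x i) (x j) → (i + j) % 2 = 1 := by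
  rw [Finset.mem_Icc] at hk
  have hsub : ({x 1, x k} : Finset V) ⊆ (Finset.Icc 1 (2*n)).image x := by
    refine Finset.insert_subset (Finset.mem_image.2 ⟨1, by rw [Finset.mem_Icc]; omega, rfl⟩)
      (Finset.singleton_subset_iff.2 (Finset.mem_image.2 ⟨k, by rw [Finset.mem_Icc]; omega, rfl⟩))
  have hdisj : Disjoint ({x 1, x k} : Finset V)
      ((Finset.Icc 1 (2*n)).image x \ {x 1, x k}) := Finset.disjoint_sdiff
  have huni : ({x 1, x k} : Finset V) ∪ ((Finset.Icc 1 (2*n)).image x \ {x 1, x k})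
      = (Finset.Icc 1 (2*n)).image x := Finset.union_sdiff_of_subset hsub
  intro i hi j hj hij hr
  rcases lt_or_gt_of_ne hij with h | h
  · have := hcyc _ _ hdisj huni ω₁ ω₂ h₁ h₂ i hi j hj h hr
    rw [Nat.odd_iff] at this; omega
  · have := hcyc _ _ hdisj huni ω₁ ω₂ h₁ h₂ j hj i hi h hr.symm
    rw [Nat.odd_iff] at this; omega

lemma reach_class (hn : 2 ≤ n)
    (hcyc : ∀ M₁ M₂ : Finset V, Disjoint M₁ M₂ →
      M₁ ∪ M₂ = (Finset.Icc 1 (2 * n)).image x →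
      ∀ ω₁ ω₂ : Finset (Sym2 V), IsDimerCover G M₁ ω₁ → IsDimerCover G M₂ ω₂ →
      ∀ i ∈ Finset.Icc 1 (2 * n), ∀ j ∈ Finset.Icc 1 (2 * n), i < j →
        (symmGraph ω₁ ω₂).Reachable (x i) (x j) → Odd (j - i))
    {k l : ℕ} (hk : k ∈ Finset.Icc 2 (2*n)) (hl : l ∈ Finset.Icc 2 (2*n)) (hkl : k ≠ l)
    {ω₁ ω₂ : Finset (Sym2 V)}
    (h₁ : IsDimerCover G {x 1, x k} ω₁)
    (h₂ : IsDimerCover G ((Finset.Icc 1 (2*n)).image x \ {x 1, x k}) ω₂)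
    (hrkl : (symmGraph ω₁ ω₂).Reachable (x k) (x l)) :
    ∀ j ∈ Finset.Icc 1 (2*n), (symmGraph ω₁ ω₂).Reachable (x k) (x j) → j = k ∨ j = l := by
  intro j hj hr
  by_contra hcon
  push_neg at hcon
  obtain ⟨hjk, hjl⟩ := hcon
  have hk1 : k ∈ Finset.Icc 1 (2*n) := by rw [Finset.mem_Icc] at *; omega
  have hl1 : l ∈ Finset.Icc 1 (2*n) := by rw [Finset.mem_Icc] at *; omega
  have o1 := reach_odd hn hcyc hk h₁ h₂ k hk1 j hj (fun h => hjk h.symm) hr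
  have o2 := reach_odd hn hcyc hk h₁ h₂ j hj l hl1 hjl (hr.symm.trans hrkl)
  have o3 := reach_odd hn hcyc hk h₁ h₂ k hk1 l hl1 hkl hrkl
  omega

lemma swap_cond (hn : 2 ≤ n)
    (hinj : ∀ i ∈ Finset.Icc 1 (2 * n), ∀ j ∈ Finset.Icc 1 (2 * n), x i = x j → i = j)
    (hcyc : ∀ M₁ M₂ : Finset V, Disjoint M₁ M₂ →
      M₁ ∪ M₂ = (Finset.Icc 1 (2 * n)).image x →
      ∀ ω₁ ω₂ : Finset (Sym2 V), IsDimerCover G M₁ ω₁ → IsDimerCover G M₂ ω₂ →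
      ∀ i ∈ Finset.Icc 1 (2 * n), ∀ j ∈ Finset.Icc 1 (2 * n), i < j →
        (symmGraph ω₁ ω₂).Reachable (x i) (x j) → Odd (j - i))
    {k l : ℕ} (hk : k ∈ Finset.Icc 2 (2*n)) (hl : l ∈ Finset.Icc 2 (2*n)) (hkl : k ≠ l)
    {ω₁ ω₂ : Finset (Sym2 V)}
    (h₁ : IsDimerCover G {x 1, x k} ω₁)
    (h₂ : IsDimerCover G ((Finset.Icc 1 (2*n)).image x \ {x 1, x k}) ω₂)
    (hrkl : (symmGraph ω₁ ω₂).Reachable (x k) (x l)) :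
    IsDimerCover G {x 1, x l} (ω₁ ∆ swapSet (x k) ω₁ ω₂) ∧
    IsDimerCover G ((Finset.Icc 1 (2*n)).image x \ {x 1, x l})
      (ω₂ ∆ swapSet (x k) ω₁ ω₂) := by
  have hk' := hk; have hl' := hl
  rw [Finset.mem_Icc] at hk' hl'
  have h1I : (1:ℕ) ∈ Finset.Icc 1 (2*n) := by rw [Finset.mem_Icc]; omega
  have hkI : k ∈ Finset.Icc 1 (2*n) := by rw [Finset.mem_Icc]; omega
  have hlI : l ∈ Finset.Icc 1 (2*n) := by rw [Finset.mem_Icc]; omega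
  have hclass := reach_class hn hcyc hk hl hkl h₁ h₂ hrkl
  have hx1k : x 1 ≠ x k := fun h => by have := hinj 1 h1I k hkI h; omega
  have hx1l : x 1 ≠ x l := fun h => by have := hinj 1 h1I l hlI h; omega
  have hxkl : x k ≠ x l := fun h => hkl (hinj k hkI l hlI h)
  have hr1 : ¬ (symmGraph ω₁ ω₂).Reachable (x k) (x 1) := by
    intro h
    rcases hclass 1 h1I h with h' | h' <;> omega
  constructor
  · refine isDimerCover_swap h₁ h₂ (x k) fun v => ⟨fun hr => ?_, fun hr => ?_⟩
    · simp only [Finset.mem_insert, Finset.mem_singleton, Finset.mem_sdiff, Finset.mem_image]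
      constructor
      · rintro (rfl | rfl)
        · exact absurd hr hr1
        · refine ⟨⟨l, hlI, rfl⟩, ?_⟩
          push_neg
          exact ⟨fun h => hx1l h.symm, fun h => hxkl h.symm⟩
      · rintro ⟨⟨j, hj, rfl⟩, hnm⟩
        push_neg at hnm
        rcases hclass j hj hr with rfl | rfl
        · exact absurd rfl hnm.2
        · exact Or.inr rfl
    · simp only [Finset.mem_insert, Finset.mem_singleton]
      constructor
      · rintro (rfl | rfl)
        · exact Or.inl rfl
        · exact absurd hrkl hr
      · rintro (rfl | rfl)
        · exact Or.inl rfl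
        · exact absurd (SimpleGraph.Reachable.refl _) hr
  · have h₂' : IsDimerCover G ((Finset.Icc 1 (2*n)).image x \ {x 1, x l})
        (ω₂ ∆ swapSet (x k) ω₂ ω₁) := by
      refine isDimerCover_swap h₂ h₁ (x k) fun v => ?_
      rw [symmGraph_comm]
      refine ⟨fun hr => ?_, fun hr => ?_⟩
      · simp only [Finset.mem_insert, Finset.mem_singleton, Finset.mem_sdiff, Finset.mem_image]
        constructor
        · rintro ⟨⟨j, hj, rfl⟩, hnm⟩
          push_neg at hnm
          rcases hclass j hj hr with rfl | rfl
          · exact Or.inr rfl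
          · exact absurd rfl hnm.2
        · rintro (rfl | rfl)
          · exact absurd hr hr1
          · refine ⟨⟨k, hkI, rfl⟩, ?_⟩
            push_neg
            exact ⟨fun h => hx1k h.symm, hxkl⟩
      · have hvl : v ≠ x l := fun h => hr (h ▸ hrkl)
        have hvk : v ≠ x k := fun h => hr (h ▸ SimpleGraph.Reachable.refl _)
        simp only [Finset.mem_sdiff, Finset.mem_insert, Finset.mem_singleton]
        tauto
    rwa [swapSet_comm] at h₂'

lemma swap_mem_filter (hn : 2 ≤ n)
    (hinj : ∀ i ∈ Finset.Icc 1 (2 * n), ∀ j ∈ Finset.Icc 1 (2 * n), x i = x j → i = j)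
    (hcyc : ∀ M₁ M₂ : Finset V, Disjoint M₁ M₂ →
      M₁ ∪ M₂ = (Finset.Icc 1 (2 * n)).image x →
      ∀ ω₁ ω₂ : Finset (Sym2 V), IsDimerCover G M₁ ω₁ → IsDimerCover G M₂ ω₂ →
      ∀ i ∈ Finset.Icc 1 (2 * n), ∀ j ∈ Finset.Icc 1 (2 * n), i < j →
        (symmGraph ω₁ ω₂).Reachable (x i) (x j) → Odd (j - i))
    {k l m : ℕ} (hk : k ∈ Finset.Icc 2 (2*n)) (hl : l ∈ Finset.Icc 2 (2*n)) (hkl : k ≠ l)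
    {p : Finset (Sym2 V) × Finset (Sym2 V)}
    (hp : IsDimerCover G {x 1, x k} p.1 ∧
      IsDimerCover G ((Finset.Icc 1 (2*n)).image x \ {x 1, x k}) p.2 ∧
      ∀ c ∈ [(x 1, x m), (x k, x l)], (symmGraph p.1 p.2).Reachable c.1 c.2) :
    IsDimerCover G {x 1, x l} (p.1 ∆ swapSet (x k) p.1 p.2) ∧
    IsDimerCover G ((Finset.Icc 1 (2*n)).image x \ {x 1, x l})
      (p.2 ∆ swapSet (x k) p.1 p.2) ∧
    ∀ c ∈ [(x 1, x m), (x l, x k)],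
      (symmGraph (p.1 ∆ swapSet (x k) p.1 p.2) (p.2 ∆ swapSet (x k) p.1 p.2)).Reachable c.1 c.2 := by
  obtain ⟨h₁, h₂, hc⟩ := hp
  have hr1m := hc (x 1, x m) (by simp)
  have hrkl := hc (x k, x l) (by simp)
  obtain ⟨c₁, c₂⟩ := swap_cond hn hinj hcyc hk hl hkl h₁ h₂ hrkl
  refine ⟨c₁, c₂, ?_⟩
  intro c hcm
  rw [symmGraph_swap]
  simp only [List.mem_cons, List.not_mem_nil, or_false] at hcm
  rcases hcm with rfl | rfl
  · exact hr1m
  · exact hrkl.symm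

lemma zdouble_swap (K : Sym2 V → ℂ) (hn : 2 ≤ n)
    (hinj : ∀ i ∈ Finset.Icc 1 (2 * n), ∀ j ∈ Finset.Icc 1 (2 * n), x i = x j → i = j)
    (hcyc : ∀ M₁ M₂ : Finset V, Disjoint M₁ M₂ →
      M₁ ∪ M₂ = (Finset.Icc 1 (2 * n)).image x →
      ∀ ω₁ ω₂ : Finset (Sym2 V), IsDimerCover G M₁ ω₁ → IsDimerCover G M₂ ω₂ →
      ∀ i ∈ Finset.Icc 1 (2 * n), ∀ j ∈ Finset.Icc 1 (2 * n), i < j →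
        (symmGraph ω₁ ω₂).Reachable (x i) (x j) → Odd (j - i))
    {k l m : ℕ} (hk : k ∈ Finset.Icc 2 (2*n)) (hl : l ∈ Finset.Icc 2 (2*n)) (hkl : k ≠ l) :
    Zdouble G K {x 1, x k} ((Finset.Icc 1 (2*n)).image x \ {x 1, x k}) [(x 1, x m), (x k, x l)] =
    Zdouble G K {x 1, x l} ((Finset.Icc 1 (2*n)).image x \ {x 1, x l}) [(x 1, x m), (x l, x k)] := by
  rw [Zdouble, Zdouble]
  refine Finset.sum_nbij'
    (fun p => (p.1 ∆ swapSet (x k) p.1 p.2, p.2 ∆ swapSet (x k) p.1 p.2))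
    (fun p => (p.1 ∆ swapSet (x l) p.1 p.2, p.2 ∆ swapSet (x l) p.1 p.2))
    ?_ ?_ ?_ ?_ ?_
  · intro p hp
    rw [Finset.mem_filter] at hp ⊢
    exact ⟨Finset.mem_univ _, swap_mem_filter hn hinj hcyc hk hl hkl hp.2⟩
  · intro p hp
    rw [Finset.mem_filter] at hp ⊢
    exact ⟨Finset.mem_univ _, swap_mem_filter hn hinj hcyc hl hk hkl.symm hp.2⟩
  · intro p hp
    rw [Finset.mem_filter] at hp
    have hrkl : (symmGraph p.1 p.2).Reachable (x k) (x l) := hp.2.2.2 (x k, x l) (by simp)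
    dsimp only
    rw [swap_swapSet hrkl, symmDiff_symmDiff_cancel_right, symmDiff_symmDiff_cancel_right]
  · intro p hp
    rw [Finset.mem_filter] at hp
    have hrlk : (symmGraph p.1 p.2).Reachable (x l) (x k) := hp.2.2.2 (x l, x k) (by simp)
    dsimp only
    rw [swap_swapSet hrlk, symmDiff_symmDiff_cancel_right, symmDiff_symmDiff_cancel_right]
  · intro p hp
    exact (prod_symmDiff_mul (swapSet_subset (x k) p.1 p.2) K).symm

lemma zdouble_sign (K : Sym2 V → ℂ) (hn : 2 ≤ n)
    (hcyc : ∀ M₁ M₂ : Finset V, Disjoint M₁ M₂ →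
      M₁ ∪ M₂ = (Finset.Icc 1 (2 * n)).image x →
      ∀ ω₁ ω₂ : Finset (Sym2 V), IsDimerCover G M₁ ω₁ → IsDimerCover G M₂ ω₂ →
      ∀ i ∈ Finset.Icc 1 (2 * n), ∀ j ∈ Finset.Icc 1 (2 * n), i < j →
        (symmGraph ω₁ ω₂).Reachable (x i) (x j) → Odd (j - i))
    {k l m : ℕ} (hk : k ∈ Finset.Icc 2 (2*n)) (hl : l ∈ Finset.Icc 2 (2*n)) (hkl : k ≠ l)
    (hz : Zdouble G K {x 1, x k} ((Finset.Icc 1 (2*n)).image x \ {x 1, x k})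
      [(x 1, x m), (x k, x l)] ≠ 0) : (k + l) % 2 = 1 := by
  rw [Zdouble] at hz
  obtain ⟨p, hp, -⟩ := Finset.exists_ne_zero_of_sum_ne_zero hz
  rw [Finset.mem_filter] at hp
  obtain ⟨-, h₁, h₂, hc⟩ := hp
  have hrkl := hc (x k, x l) (by simp)
  have hkI : k ∈ Finset.Icc 1 (2*n) := by rw [Finset.mem_Icc] at *; omega
  have hlI : l ∈ Finset.Icc 1 (2*n) := by rw [Finset.mem_Icc] at *; omega
  exact reach_odd hn hcyc hk h₁ h₂ k hkI l hlI hkl hrkl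

end Ctx

/-- Generic cancellation: a symmetric amplitude with odd sign pairing sums to zero. -/
lemma antisym_cancel {S : Finset ℕ} (Z : ℕ → ℕ → ℕ → ℂ)
    (hswap : ∀ k ∈ S, ∀ l ∈ S, k ≠ l → ∀ m, Z k l m = Z l k m)
    (hsign : ∀ k ∈ S, ∀ l ∈ S, k ≠ l → ∀ m, Z k l m ≠ 0 → (k + l) % 2 = 1) :
    ∑ k ∈ S, (-1:ℂ)^k * ∑ l ∈ S.erase k, ∑ m ∈ (S.erase k).erase l, Z k l m = 0 := by
  have step1 : ∀ k, (-1:ℂ)^k * ∑ l ∈ S.erase k, ∑ m ∈ (S.erase k).erase l, Z k l m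
      = ∑ l ∈ S, if l ≠ k then (-1:ℂ)^k * ∑ m ∈ (S.erase k).erase l, Z k l m else 0 := by
    intro k
    rw [Finset.mul_sum, ← Finset.filter_ne' S k, Finset.sum_filter]
  calc ∑ k ∈ S, (-1:ℂ)^k * ∑ l ∈ S.erase k, ∑ m ∈ (S.erase k).erase l, Z k l m
      = ∑ k ∈ S, ∑ l ∈ S, if l ≠ k then (-1:ℂ)^k * ∑ m ∈ (S.erase k).erase l, Z k l m else 0 :=
        Finset.sum_congr rfl fun k _ => step1 k
    _ = ∑ q ∈ S ×ˢ S, (if q.2 ≠ q.1 then (-1:ℂ)^q.1 * ∑ m ∈ (S.erase q.1).erase q.2, Z q.1 q.2 m else 0) :=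
        (Finset.sum_product' S S
          (fun k l => if l ≠ k then (-1:ℂ)^k * ∑ m ∈ (S.erase k).erase l, Z k l m else 0)).symm
    _ = 0 := by
        refine Finset.sum_involution (fun q _ => (q.2, q.1)) ?_ ?_ ?_ ?_
        · intro q hq
          rw [Finset.mem_product] at hq
          obtain ⟨hk, hl⟩ := hq
          by_cases hne : q.2 = q.1
          · simp [hne]
          · rw [if_pos hne, if_pos (Ne.symm hne)]
            have hkey : ∀ m' ∈ (S.erase q.1).erase q.2,
                (-1:ℂ)^q.1 * Z q.1 q.2 m' + (-1:ℂ)^q.2 * Z q.2 q.1 m' = 0 := by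
              intro m' _
              have hzz := hswap q.1 hk q.2 hl (Ne.symm hne) m'
              rw [← hzz, ← add_mul]
              rcases eq_or_ne (Z q.1 q.2 m') 0 with h0 | h0
              · rw [h0, mul_zero]
              · have hodd := hsign q.1 hk q.2 hl (Ne.symm hne) m' h0
                have hsgn : (-1:ℂ)^q.1 + (-1:ℂ)^q.2 = 0 := by
                  rcases Nat.even_or_odd q.1 with he | ho
                  · have hol : Odd q.2 := by
                      rw [Nat.even_iff] at he; rw [Nat.odd_iff]; omega
                    rw [Even.neg_one_pow he, Odd.neg_one_pow hol]; ring
                  · have hel : Even q.2 := by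
                      rw [Nat.odd_iff] at ho; rw [Nat.even_iff]; omega
                    rw [Odd.neg_one_pow ho, Even.neg_one_pow hel]; ring
                rw [hsgn, zero_mul]
            rw [Finset.erase_right_comm (a := q.2) (b := q.1), Finset.mul_sum, Finset.mul_sum,
              ← Finset.sum_add_distrib]
            exact Finset.sum_eq_zero hkey
        · intro q hq hF h
          apply hF
          have h21 : q.2 = q.1 := congrArg Prod.fst h
          rw [if_neg (by simp [h21])]
        · intro q hq
          rw [Finset.mem_product] at hq ⊢
          exact ⟨hq.2, hq.1⟩
        · intro q hq
          exact Prod.mk.eta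

/-- The antisymmetric double sum of connection amplitudes in which `x 1` and `x k`
are connected to two further monomers vanishes, for boundary monomers in cyclic
order (expressed by the cyclic-order hypothesis `hcyc`). -/
theorem antisymmetric_connection_sum_vanishes {V : Type*} [Fintype V] [DecidableEq V]
    (G : SimpleGraph V) (K : Sym2 V → ℂ) (n : ℕ) (hn : 2 ≤ n) (x : ℕ → V)
    (hinj : ∀ i ∈ Finset.Icc 1 (2 * n), ∀ j ∈ Finset.Icc 1 (2 * n), x i = x j → i = j)
    -- cyclic-order hypothesis: monomers connected in an overlay have indices of
    -- odd difference
    (hcyc : ∀ M₁ M₂ : Finset V, Disjoint M₁ M₂ →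
      M₁ ∪ M₂ = (Finset.Icc 1 (2 * n)).image x →
      ∀ ω₁ ω₂ : Finset (Sym2 V), IsDimerCover G M₁ ω₁ → IsDimerCover G M₂ ω₂ →
      ∀ i ∈ Finset.Icc 1 (2 * n), ∀ j ∈ Finset.Icc 1 (2 * n), i < j →
        (symmGraph ω₁ ω₂).Reachable (x i) (x j) → Odd (j - i)) :
    ∑ k ∈ Finset.Icc 2 (2 * n), (-1 : ℂ) ^ k *
      ∑ l ∈ (Finset.Icc 2 (2 * n)).erase k,
        ∑ m ∈ ((Finset.Icc 2 (2 * n)).erase k).erase l,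
          Zdouble G K {x 1, x k} (((Finset.Icc 1 (2 * n)).image x) \ {x 1, x k})
            [(x 1, x m), (x k, x l)] = 0 := by
  exact antisym_cancel
    (fun k l m => Zdouble G K {x 1, x k} (((Finset.Icc 1 (2 * n)).image x) \ {x 1, x k})
      [(x 1, x m), (x k, x l)])
    (fun k hk l hl hkl m => zdouble_swap K hn hinj hcyc hk hl hkl)
    (fun k hk l hl hkl m hz => zdouble_sign K hn hcyc hk hl hkl hz)
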